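/- Theorem 11(i): Let C be a graphoid of CI relations on [p] and let G_π and G_τ be minimal I-MAPs with respect to C that are Markov equivalent. If G_π is MEC-s-minimal, then there exists a weakly decreasing sequence of covered arrow reversals (a sequence of minimal I-MAPs w.r.t. C whose consecutive members are connected by covered arrow reversals and whose arrow counts never increase) from G_π to G_τ. -/

import Mathlib

open scoped Classical

namespace GSP

/-- A DAG on the node set `Fin p`, given by its finite set of arrows,
which must form an acyclic relation. -/
structure DAG (p : ℕ) where
  arrows : Finset (Fin p × Fin p)
  acyclic : ∀ i : Fin p, ¬ Relation.TransGen (fun a b => (a, b) ∈ arrows) i i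

variable {p : ℕ}

namespace DAG

/-- `a → b` is an arrow of `G`. -/
def Arrow (G : DAG p) (a b : Fin p) : Prop := (a, b) ∈ G.arrows

/-- The number of arrows of `G`, denoted `|G|`. -/
def numArrows (G : DAG p) : ℕ := G.arrows.card

/-- The set of parents of a node `j` in `G`. -/
noncomputable def parents (G : DAG p) (j : Fin p) : Finset (Fin p) :=
  Finset.univ.filter fun i => G.Arrow i j

/-- Adjacency: `a` and `b` are joined by an arrow in some direction. -/
def Adj (G : DAG p) (a b : Fin p) : Prop := G.Arrow a b ∨ G.Arrow b a

/-- `b` is a collider between `a` and `c`: both arrows point into `b`. -/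
def Collider (G : DAG p) (a b c : Fin p) : Prop := G.Arrow a b ∧ G.Arrow c b

/-- `d` is a (reflexive) descendant of `a` in `G`. -/
def Desc (G : DAG p) (a d : Fin p) : Prop := Relation.ReflTransGen G.Arrow a d

/-- The list of nodes `l` is a d-connecting walk given `S`: consecutive nodes
are adjacent, every internal collider lies in `S` or has a descendant in `S`,
and no internal non-collider lies in `S`. -/
def DConnWalk (G : DAG p) (S : Finset (Fin p)) (l : List (Fin p)) : Prop :=
  l.Chain' G.Adj ∧
  ∀ (m : ℕ) (_ : 1 ≤ m) (h2 : m + 1 < l.length),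
    (G.Collider (l.get ⟨m - 1, by omega⟩) (l.get ⟨m, by omega⟩) (l.get ⟨m + 1, h2⟩) →
      ∃ d ∈ S, G.Desc (l.get ⟨m, by omega⟩) d) ∧
    (¬ G.Collider (l.get ⟨m - 1, by omega⟩) (l.get ⟨m, by omega⟩) (l.get ⟨m + 1, h2⟩) →
      l.get ⟨m, by omega⟩ ∉ S)

/-- `i` and `j` are d-connected given `S` in `G`. -/
def DConn (G : DAG p) (i j : Fin p) (S : Finset (Fin p)) : Prop :=
  ∃ l : List (Fin p), l.head? = some i ∧ l.getLast? = some j ∧ G.DConnWalk S l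

/-- `i` and `j` are d-separated given `S` in `G`. -/
def DSep (G : DAG p) (i j : Fin p) (S : Finset (Fin p)) : Prop := ¬ G.DConn i j S

end DAG

/-- A conditional independence (CI) relation `i ⊥ j | S` on `[p]`. -/
abbrev CIRel (p : ℕ) := Fin p × Fin p × Finset (Fin p)

/-- The set of CI relations encoded by the d-separations of `G`. -/
def CIof (G : DAG p) : Set (CIRel p) :=
  {t | t.1 ≠ t.2.1 ∧ t.1 ∉ t.2.2 ∧ t.2.1 ∉ t.2.2 ∧ G.DSep t.1 t.2.1 t.2.2}

/-- The symmetric closure of a set of CI relations. -/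
def symClosure (C : Set (CIRel p)) : Set (CIRel p) :=
  {t | t ∈ C ∨ (t.2.1, t.1, t.2.2) ∈ C}

/-- Symmetry of a set of CI relations. -/
def SymmetricCI (C : Set (CIRel p)) : Prop :=
  ∀ i j S, (i, j, S) ∈ C → (j, i, S) ∈ C

/-- A semigraphoid: symmetric and satisfying (SG2). -/
def Semigraphoid (C : Set (CIRel p)) : Prop :=
  SymmetricCI C ∧
  ∀ i j k S, (i, j, S) ∈ C → (i, k, insert j S) ∈ C →
    (i, k, S) ∈ C ∧ (i, j, insert k S) ∈ C

/-- A graphoid: a semigraphoid additionally satisfying intersection (INT). -/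
def Graphoid (C : Set (CIRel p)) : Prop :=
  Semigraphoid C ∧
  ∀ i j k S, (i, j, insert k S) ∈ C → (i, k, insert j S) ∈ C →
    (i, j, S) ∈ C ∧ (i, k, S) ∈ C

/-- Build a DAG from a relation compatible with a numeric ordering. -/
noncomputable def mkDAG (R : Fin p → Fin p → Prop) (f : Fin p → ℕ)
    (hf : ∀ a b, R a b → f a < f b) : DAG p where
  arrows := Finset.univ.filter fun e : Fin p × Fin p => R e.1 e.2
  acyclic := by
    intro i hi
    have key : ∀ a b : Fin p,
        Relation.TransGen (fun a b : Fin p =>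
          (a, b) ∈ Finset.univ.filter fun e : Fin p × Fin p => R e.1 e.2) a b →
        f a < f b := by
      intro a b h
      induction h with
      | single h => exact hf _ _ (by simpa using h)
      | tail _ h ih => exact lt_trans ih (hf _ _ (by simpa using h))
    exact lt_irrefl _ (key i i hi)

/-- The conditioning set `{π_1, …, π_j} \ {π_i, π_j}` (where `b = π_j` is the
later node and `a = π_i` the earlier one) used in the definition of minimal
I-MAPs. -/
noncomputable def condSet (π : Equiv.Perm (Fin p)) (a b : Fin p) : Finset (Fin p) :=
  ((Finset.univ.filter fun k : Fin p => π.symm k ≤ π.symm b).erase a).erase b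

/-- The minimal I-MAP `G_π` of a set `C` of CI relations with respect to the
permutation (ordering) `π`: there is an arrow `π_i → π_j` for positions `i < j`
iff `π_i ⊥ π_j | {π_1, …, π_j} \ {π_i, π_j}` is not in `C`. -/
noncomputable def minimalIMAP (C : Set (CIRel p)) (π : Equiv.Perm (Fin p)) : DAG p :=
  mkDAG (fun a b => π.symm a < π.symm b ∧ (a, b, condSet π a b) ∉ C)
    (fun a => (π.symm a : ℕ)) (fun a b h => by exact_mod_cast h.1)

/-- Markov equivalence of DAGs: equal sets of d-separation statements. -/
def MarkovEquiv (G H : DAG p) : Prop := CIof G = CIof H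

/-- `H` is an independence map of `G`, written `G ≤ H`: `CI(H) ⊆ CI(G)`. -/
def IMapLE (G H : DAG p) : Prop := CIof H ⊆ CIof G

/-- `π` is a linear extension of `G`: every arrow goes from an earlier to a
later element of `π`. -/
def IsLinExt (G : DAG p) (π : Equiv.Perm (Fin p)) : Prop :=
  ∀ a b, G.Arrow a b → π.symm a < π.symm b

/-- `a → b` is a covered arrow of `G`: `pa(a) = pa(b) \ {a}`. -/
def DAG.Covered (G : DAG p) (a b : Fin p) : Prop :=
  G.Arrow a b ∧ G.parents a = (G.parents b).erase a

/-- The minimal I-MAPs `G_σ` and `G_ρ` are connected by a covered arrow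
reversal: `ρ` is a linear extension of the DAG obtained from `G_σ` by
reversing one covered arrow of `G_σ`. -/
def CoveredReversalStep (C : Set (CIRel p)) (σ ρ : Equiv.Perm (Fin p)) : Prop :=
  ∃ a b : Fin p, (minimalIMAP C σ).Covered a b ∧
    ρ.symm b < ρ.symm a ∧
    ∀ x y : Fin p, (minimalIMAP C σ).Arrow x y → (x, y) ≠ (a, b) →
      ρ.symm x < ρ.symm y

/-- A weakly decreasing sequence of covered arrow reversals: a sequence of
minimal I-MAPs in which consecutive members are connected by covered arrow
reversals and the number of arrows never increases. -/
def WeaklyDecreasingSeq (C : Set (CIRel p)) (s : List (Equiv.Perm (Fin p))) : Prop :=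
  s.Chain' fun σ ρ => CoveredReversalStep C σ ρ ∧
    (minimalIMAP C ρ).numArrows ≤ (minimalIMAP C σ).numArrows

/-- Some weakly decreasing sequence of covered arrow reversals starting at
`G_π` reaches a minimal I-MAP with strictly fewer arrows. -/
def EscapesByCoveredReversals (C : Set (CIRel p)) (π : Equiv.Perm (Fin p)) : Prop :=
  ∃ (s : List (Equiv.Perm (Fin p))) (τ : Equiv.Perm (Fin p)),
    s.head? = some π ∧ s.getLast? = some τ ∧ WeaklyDecreasingSeq C s ∧
    (minimalIMAP C τ).numArrows < (minimalIMAP C π).numArrows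

/-- The TSP assumption of `C` with respect to `G`. -/
def TSP (C : Set (CIRel p)) (G : DAG p) : Prop :=
  CIof G ⊆ C ∧
  ∀ π : Equiv.Perm (Fin p), ¬ EscapesByCoveredReversals C π →
    MarkovEquiv (minimalIMAP C π) G

/-- The SMR assumption of `C` with respect to `G`. -/
def SMR (C : Set (CIRel p)) (G : DAG p) : Prop :=
  CIof G ⊆ C ∧
  ∀ H : DAG p, CIof H ⊆ C → ¬ MarkovEquiv H G → G.numArrows < H.numArrows

end GSP

namespace GSP

variable {p : ℕ}

/-- The minimal I-MAP `G_π` is MEC-minimal with respect to `C`: for every DAG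
`G` Markov equivalent to `G_π` and every linear extension `τ` of `G`, one has
`G_π ≤ G_τ`. -/
def MECMinimal (C : Set (CIRel p)) (π : Equiv.Perm (Fin p)) : Prop :=
  ∀ G : DAG p, MarkovEquiv G (minimalIMAP C π) →
    ∀ τ : Equiv.Perm (Fin p), IsLinExt G τ →
      IMapLE (minimalIMAP C π) (minimalIMAP C τ)

/-- The minimal I-MAP `G_π` is MEC-s-minimal with respect to `C`: it is
MEC-minimal and moreover its skeleton is contained in the skeleton of `G_τ`
for all such `G` and `τ`. -/
def MECsMinimal (C : Set (CIRel p)) (π : Equiv.Perm (Fin p)) : Prop :=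
  MECMinimal C π ∧
  ∀ G : DAG p, MarkovEquiv G (minimalIMAP C π) →
    ∀ τ : Equiv.Perm (Fin p), IsLinExt G τ →
      ∀ a b : Fin p, (minimalIMAP C π).Adj a b → (minimalIMAP C τ).Adj a b

/-!
While `G_σ ≠ G_τ`, Chickering's lemma provides a covered arrow `u → v` of `G_σ` that is reversed
in `G_τ`. Transposing the node just before `v` with `v` leaves `G_σ` unchanged (graphoid), so
`u` and `v` may be assumed consecutive in `σ`; transposing them then yields a minimal I-MAP whose
arrows lie among those of the covered reversal of `G_σ` (semigraphoid). A covered reversal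
preserves d-separation, so that reversal is Markov equivalent to `G_π`, and MEC-s-minimality of
`G_π` makes the new minimal I-MAP lose no adjacency: it is the covered reversal itself. It has as
many arrows as `G_σ` and one arrow fewer pointing against `G_τ`, so the process terminates.
-/

namespace DAG

variable {G : DAG p} {S : Finset (Fin p)} {a b c x y : Fin p}

theorem ext {G H : DAG p} (h : ∀ a b, G.Arrow a b ↔ H.Arrow a b) : G = H := by
  obtain ⟨A, _⟩ := G
  obtain ⟨B, _⟩ := H
  congr
  ext ⟨a, b⟩
  exact h a b

theorem Arrow.ne (h : G.Arrow a b) : a ≠ b := by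
  rintro rfl
  exact G.acyclic a (.single h)

theorem Arrow.asymm (h : G.Arrow a b) : ¬ G.Arrow b a :=
  fun h' => G.acyclic a (.head h (.single h'))

theorem Arrow.adj (h : G.Arrow a b) : G.Adj a b := Or.inl h

theorem Adj.symm (h : G.Adj a b) : G.Adj b a := Or.symm h

theorem Adj.ne (h : G.Adj a b) : a ≠ b := h.elim Arrow.ne fun h => h.ne.symm

theorem mem_parents : a ∈ G.parents b ↔ G.Arrow a b := by
  simp [parents]

theorem Covered.arrow_iff (h : G.Covered a b) : G.Arrow x a ↔ G.Arrow x b ∧ x ≠ a := by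
  rw [← mem_parents, h.2, Finset.mem_erase, mem_parents, and_comm]

theorem covered_iff : G.Covered a b ↔ G.Arrow a b ∧ ∀ x, G.Arrow x a ↔ G.Arrow x b ∧ x ≠ a :=
  ⟨fun h => ⟨h.1, fun _ => h.arrow_iff⟩, fun h => ⟨h.1, by
    ext x; rw [mem_parents, Finset.mem_erase, mem_parents, h.2, and_comm]⟩⟩

def Unblocked (G : DAG p) (S : Finset (Fin p)) (a b c : Fin p) : Prop :=
  (G.Collider a b c → ∃ d ∈ S, G.Desc b d) ∧ (¬ G.Collider a b c → b ∉ S)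

theorem dConnWalk_singleton : G.DConnWalk S [a] :=
  ⟨List.isChain_singleton a, fun m hm h => by simp at h⟩

theorem dConnWalk_pair : G.DConnWalk S [a, b] ↔ G.Adj a b :=
  ⟨fun h => List.isChain_pair.mp h.1, fun h => ⟨List.isChain_pair.mpr h, fun m hm h => by
    simp only [List.length_cons, List.length_nil] at h; omega⟩⟩

theorem dConnWalk_cons_cons_cons {t : List (Fin p)} :
    G.DConnWalk S (a :: b :: c :: t) ↔
      G.Adj a b ∧ G.Unblocked S a b c ∧ G.DConnWalk S (b :: c :: t) := by
  unfold DConnWalk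
  simp only [List.get_eq_getElem]
  refine ⟨fun ⟨hch, h⟩ => ⟨(List.isChain_cons_cons.mp hch).1, h 1 le_rfl (by simp),
      (List.isChain_cons_cons.mp hch).2, fun m hm h2 => ?_⟩,
    fun ⟨hab, hb, hch, h⟩ => ⟨List.isChain_cons_cons.mpr ⟨hab, hch⟩, fun m hm h2 => ?_⟩⟩
  · obtain ⟨k, rfl⟩ : ∃ k, m = k + 1 := ⟨m - 1, by omega⟩
    simpa using h (k + 2) (by omega) (by simpa using h2)
  · obtain ⟨k, rfl⟩ : ∃ k, m = k + 1 := ⟨m - 1, by omega⟩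
    rcases k with _ | k
    · simpa [Unblocked] using hb
    · simpa using h (k + 1) (by omega) (by simpa using h2)

theorem dConnWalk_cons {t : List (Fin p)} (hab : G.Adj a b)
    (hb : ∀ c ∈ t.head?, G.Unblocked S a b c) (h : G.DConnWalk S (b :: t)) :
    G.DConnWalk S (a :: b :: t) := by
  match t with
  | [] => exact dConnWalk_pair.mpr hab
  | c :: t => exact dConnWalk_cons_cons_cons.mpr ⟨hab, hb c rfl, h⟩

theorem DConnWalk.reverse {l : List (Fin p)} (h : G.DConnWalk S l) :
    G.DConnWalk S l.reverse := by
  refine ⟨List.isChain_reverse.mpr (h.1.imp fun _ _ => Adj.symm), fun m hm h2 => ?_⟩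
  simp only [List.get_eq_getElem, List.getElem_reverse]
  simp only [List.length_reverse] at h2
  have hl := h.2 (l.length - 1 - m) (by omega) (by omega)
  have e₁ : l.length - 1 - (m - 1) = l.length - 1 - m + 1 := by omega
  have e₂ : l.length - 1 - (m + 1) = l.length - 1 - m - 1 := by omega
  simp only [List.get_eq_getElem, e₁, e₂] at hl ⊢
  exact ⟨fun hc => hl.1 ⟨hc.2, hc.1⟩, fun hc => hl.2 fun hc' => hc ⟨hc'.2, hc'.1⟩⟩

theorem DConn.symm (h : G.DConn x y S) : G.DConn y x S := by
  obtain ⟨l, hx, hy, hl⟩ := h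
  exact ⟨l.reverse, by rwa [List.head?_reverse], by rwa [List.getLast?_reverse], hl.reverse⟩

theorem Adj.dConn (h : G.Adj a b) : G.DConn a b S :=
  ⟨[a, b], rfl, rfl, dConnWalk_pair.mpr h⟩

theorem dConn_of_collider (hab : G.Arrow a b) (hcb : G.Arrow c b) (hb : b ∈ S) :
    G.DConn a c S :=
  ⟨[a, b, c], rfl, rfl, dConnWalk_cons_cons_cons.mpr ⟨hab.adj, ⟨fun _ => ⟨b, hb, .refl⟩,
    fun h => absurd ⟨hab, hcb⟩ h⟩, dConnWalk_pair.mpr hcb.adj.symm⟩⟩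

/-- `G.ActiveWalk S co x y out`: a walk from `x` to `y` whose internal colliders satisfy `co`
and whose internal non-colliders avoid `S`; `out` says that it leaves `x` along an arrow out
of `x`. The empty walk counts as leaving along an out-arrow, so prepending an arrow to it
requires `y ∉ S`. -/
inductive ActiveWalk (G : DAG p) (S : Finset (Fin p)) (co : Fin p → Prop) :
    Fin p → Fin p → Bool → Prop
  | nil (y : Fin p) : ActiveWalk G S co y y true
  | cons_in {a b y : Fin p} {out : Bool} :
      G.Arrow b a → b ∉ S → ActiveWalk G S co b y out → ActiveWalk G S co a y false
  | cons_out {a b y : Fin p} :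
      G.Arrow a b → b ∉ S → ActiveWalk G S co b y true → ActiveWalk G S co a y true
  | cons_collider {a b y : Fin p} :
      G.Arrow a b → co b → ActiveWalk G S co b y false → ActiveWalk G S co a y true

def DescIn (G : DAG p) (S : Finset (Fin p)) (c : Fin p) : Prop := ∃ d ∈ S, G.Desc c d

namespace ActiveWalk

variable {co co' : Fin p → Prop} {out : Bool}

theorem mono (hco : ∀ c, co c → co' c) (h : G.ActiveWalk S co x y out) :
    G.ActiveWalk S co' x y out := by
  induction h with
  | nil y => exact nil y
  | cons_in e hb _ ih => exact cons_in e hb ih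
  | cons_out e hb _ ih => exact cons_out e hb ih
  | cons_collider e hb _ ih => exact cons_collider e (hco _ hb) ih

/-- A collider outside `S` with a descendant `d ∈ S` is bypassed by going down to `d` and back. -/
theorem detour {z d : Fin p} (hzd : G.Desc z d) (hd : d ∈ S) (hz : z ∉ S)
    (h : G.ActiveWalk S (· ∈ S) z y false) : G.ActiveWalk S (· ∈ S) z y true := by
  induction hzd using Relation.ReflTransGen.head_induction_on with
  | refl => exact absurd hd hz
  | @head z c hzc _ ih =>
    by_cases hc : c ∈ S
    · exact cons_collider hzc hc (cons_in hzc hz h)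
    · exact cons_out hzc hc (ih hc (cons_in hzc hz h))

theorem of_descIn (h : G.ActiveWalk S (G.DescIn S) x y out) :
    G.ActiveWalk S (· ∈ S) x y out := by
  induction h with
  | nil y => exact nil y
  | cons_in e hb _ ih => exact cons_in e hb ih
  | cons_out e hb _ ih => exact cons_out e hb ih
  | @cons_collider a b y e hb _ ih =>
    by_cases hbS : b ∈ S
    · exact cons_collider e hbS ih
    · obtain ⟨d, hd, hbd⟩ := hb
      exact cons_out e hbS (detour hbd hd hbS ih)

theorem exists_dConnWalk (h : G.ActiveWalk S (G.DescIn S) x y out) :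
    ∃ t, (x :: t).getLast? = some y ∧ G.DConnWalk S (x :: t) ∧
      ∀ c ∈ t.head?, (out = true ↔ G.Arrow x c) := by
  induction h with
  | nil y => exact ⟨[], rfl, dConnWalk_singleton, by simp⟩
  | @cons_in a b y out e hb _ ih =>
    obtain ⟨t, hl, hw, hout⟩ := ih
    refine ⟨b :: t, by simpa using hl, dConnWalk_cons e.adj.symm ?_ hw, by simp [e.asymm]⟩
    exact fun c _ => ⟨fun hc => absurd hc.1 e.asymm, fun _ => hb⟩
  | @cons_out a b y e hb _ ih =>
    obtain ⟨t, hl, hw, hout⟩ := ih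
    refine ⟨b :: t, by simpa using hl, dConnWalk_cons e.adj ?_ hw, by simp [e]⟩
    exact fun c hc => ⟨fun hcol => absurd hcol.2 ((hout c hc).mp rfl).asymm, fun _ => hb⟩
  | @cons_collider a b y e hb _ ih =>
    obtain ⟨t, hl, hw, hout⟩ := ih
    refine ⟨b :: t, by simpa using hl, dConnWalk_cons e.adj ?_ hw, by simp [e]⟩
    intro c hc
    obtain ⟨t', rfl⟩ : ∃ t', t = c :: t' := ⟨t.tail, by cases t <;> simp_all⟩
    have hcb : G.Arrow c b :=
      ((List.isChain_cons_cons.mp hw.1).1).resolve_left fun h => by simpa using (hout c hc).mpr h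
    exact ⟨fun _ => hb, fun hn => absurd ⟨e, hcb⟩ hn⟩

theorem dConn (h : G.ActiveWalk S (G.DescIn S) x y out) : G.DConn x y S := by
  obtain ⟨t, hl, hw, -⟩ := h.exists_dConnWalk
  exact ⟨x :: t, rfl, hl, hw⟩

end ActiveWalk

theorem exists_activeWalk_of_dConnWalk (hy : y ∉ S) {t : List (Fin p)} :
    ∀ {x}, (x :: t).getLast? = some y → G.DConnWalk S (x :: t) →
      ∃ out, G.ActiveWalk S (G.DescIn S) x y out ∧ ∀ c ∈ t.head?, (out = true ↔ G.Arrow x c) := by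
  induction t with
  | nil =>
    intro x hl _
    obtain rfl : x = y := by simpa using hl
    exact ⟨true, .nil x, by simp⟩
  | cons b t ih =>
    intro x hl hw
    have hxb : G.Adj x b := (List.isChain_cons_cons.mp hw.1).1
    obtain ⟨out, hwb, hout⟩ := ih (by simpa using hl) (by
      cases t with
      | nil => exact dConnWalk_singleton
      | cons => exact (dConnWalk_cons_cons_cons.mp hw).2.2)
    rcases hxb with hxb | hbx
    · refine ⟨true, ?_, by simp [hxb]⟩
      cases t with
      | nil =>
        obtain rfl : b = y := by simpa using hl
        exact .cons_out hxb hy (.nil b)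
      | cons c t =>
        have hbc := (dConnWalk_cons_cons_cons.mp hw).2.1
        by_cases hcol : G.Collider x b c
        · have : out = false := by simpa [hcol.2.asymm] using hout c rfl
          exact .cons_collider hxb (hbc.1 hcol) (this ▸ hwb)
        · have : out = true := (hout c rfl).mpr
            ((List.isChain_cons_cons.mp (dConnWalk_cons_cons_cons.mp hw).2.2.1).1.resolve_right
              fun h => hcol ⟨hxb, h⟩)
          exact .cons_out hxb (hbc.2 hcol) (this ▸ hwb)
    · refine ⟨false, ?_, by simp [hbx.asymm]⟩
      cases t with
      | nil =>
        obtain rfl : b = y := by simpa using hl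
        exact .cons_in hbx hy hwb
      | cons c t =>
        exact .cons_in hbx ((dConnWalk_cons_cons_cons.mp hw).2.1.2 fun h => h.1.asymm hbx) hwb

theorem dConn_iff_exists_activeWalk (hy : y ∉ S) :
    G.DConn x y S ↔ ∃ out, G.ActiveWalk S (· ∈ S) x y out := by
  constructor
  · rintro ⟨_ | ⟨x', t⟩, hx, hl, hw⟩
    · simp at hx
    · obtain rfl : x' = x := by simpa using hx
      obtain ⟨out, h, -⟩ := exists_activeWalk_of_dConnWalk hy hl hw
      exact ⟨out, h.of_descIn⟩
  · rintro ⟨out, h⟩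
    exact (h.mono fun c hc => ⟨c, hc, .refl⟩).dConn

end DAG

section MinimalIMAP

variable {C : Set (CIRel p)} {π σ ρ : Equiv.Perm (Fin p)} {a b c k x y : Fin p}

noncomputable def predSet (π : Equiv.Perm (Fin p)) (b : Fin p) : Finset (Fin p) :=
  Finset.univ.filter fun k => π.symm k < π.symm b

theorem mem_predSet : k ∈ predSet π b ↔ π.symm k < π.symm b := by
  simp [predSet]

theorem condSet_eq_erase_predSet : condSet π a b = (predSet π b).erase a := by
  ext k
  simp only [condSet, Finset.mem_erase, Finset.mem_filter, Finset.mem_univ, true_and, mem_predSet]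
  constructor
  · rintro ⟨hkb, hka, hle⟩
    exact ⟨hka, lt_of_le_of_ne hle fun h => hkb (π.symm.injective h)⟩
  · rintro ⟨hka, hlt⟩
    exact ⟨fun h => (h ▸ hlt).false, hka, hlt.le⟩

theorem mem_condSet : k ∈ condSet π a b ↔ k ≠ a ∧ π.symm k < π.symm b := by
  rw [condSet_eq_erase_predSet, Finset.mem_erase, mem_predSet]

theorem minimalIMAP_arrow_iff :
    (minimalIMAP C π).Arrow a b ↔ π.symm a < π.symm b ∧ (a, b, condSet π a b) ∉ C := by
  simp [minimalIMAP, mkDAG, DAG.Arrow]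

theorem minimalIMAP_arrow_iff_predSet :
    (minimalIMAP C π).Arrow a b ↔ a ∈ predSet π b ∧ (a, b, (predSet π b).erase a) ∉ C := by
  rw [minimalIMAP_arrow_iff, mem_predSet, condSet_eq_erase_predSet]

theorem minimalIMAP_arrow_congr (h : predSet π b = predSet σ b) :
    (minimalIMAP C π).Arrow a b ↔ (minimalIMAP C σ).Arrow a b := by
  rw [minimalIMAP_arrow_iff_predSet, minimalIMAP_arrow_iff_predSet, h]

theorem isLinExt_minimalIMAP (C : Set (CIRel p)) (π : Equiv.Perm (Fin p)) :
    IsLinExt (minimalIMAP C π) π :=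
  fun _ _ h => (minimalIMAP_arrow_iff.mp h).1

namespace IsLinExt

variable {H : DAG p}

/-- An active walk from `y` leaving along an out-arrow only moves forward in `ρ` (its colliders
would lie in `condSet ρ x y`, before `y`), so it never reaches `x`; one entering `y` starts at a
parent of `y`, which lies in `condSet ρ x y` unless it is `x`. -/
theorem dSep_condSet (hρ : IsLinExt H ρ) (hxy : ρ.symm x < ρ.symm y) (hadj : ¬ H.Adj x y) :
    H.DSep x y (condSet ρ x y) := by
  set S := condSet ρ x y
  have hS : ∀ {k}, k ∈ S ↔ k ≠ x ∧ ρ.symm k < ρ.symm y := mem_condSet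
  have hxS : x ∉ S := fun h => (hS.mp h).1 rfl
  have leaving : ∀ {b z out}, H.ActiveWalk S (· ∈ S) b z out → ρ.symm z < ρ.symm y →
      out = true → ρ.symm y ≤ ρ.symm b → False := by
    intro b z out hw hz
    induction hw with
    | nil => exact fun _ h => (lt_of_le_of_lt h hz).false
    | cons_in => exact fun h => nomatch h
    | cons_out e _ _ ih => exact fun _ h => ih hz rfl (h.trans (hρ _ _ e).le)
    | cons_collider e hc _ _ =>
      exact fun _ h => ((hS.mp hc).2.trans_le (h.trans (hρ _ _ e).le)).false
  intro hconn
  obtain ⟨out, hw⟩ := (DAG.dConn_iff_exists_activeWalk hxS).mp hconn.symm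
  cases hw with
  | nil => exact hxy.false
  | @cons_in _ b _ _ e hb _ =>
    by_cases hbx : b = x
    · exact hadj (hbx ▸ e.adj)
    · exact hb (hS.mpr ⟨hbx, hρ _ _ e⟩)
  | cons_out e hb hw => exact leaving (.cons_out e hb hw) hxy rfl le_rfl
  | cons_collider e hc hw => exact leaving (.cons_collider e hc hw) hxy rfl le_rfl

theorem mem_CIof (hρ : IsLinExt H ρ) (hxy : ρ.symm x < ρ.symm y) (hadj : ¬ H.Adj x y) :
    (x, y, condSet ρ x y) ∈ CIof H :=
  ⟨fun h => hxy.ne (congrArg ρ.symm h), by simp [mem_condSet], by simp [mem_condSet],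
    hρ.dSep_condSet hxy hadj⟩

end IsLinExt

namespace MarkovEquiv

variable {G H : DAG p}

theorem symm (h : MarkovEquiv G H) : MarkovEquiv H G := Eq.symm h

theorem trans {K : DAG p} (h : MarkovEquiv G H) (h' : MarkovEquiv H K) : MarkovEquiv G K :=
  Eq.trans h h'

theorem adj (hGH : MarkovEquiv G H) (hρ : IsLinExt H ρ) (h : G.Adj x y) : H.Adj x y := by
  have key : ∀ {x y}, ρ.symm x < ρ.symm y → G.Adj x y → H.Adj x y := fun hxy h => by
    by_contra hn
    have hCI := hρ.mem_CIof hxy hn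
    rw [← hGH] at hCI
    exact hCI.2.2.2 h.dConn
  rcases lt_or_gt_of_ne fun e => h.ne (ρ.symm.injective e) with hxy | hyx
  · exact key hxy h
  · exact (key hyx h.symm).symm

theorem arrow_of_vStructure (hGH : MarkovEquiv G H) (hσ : IsLinExt G σ) (hρ : IsLinExt H ρ)
    (hab : G.Arrow a b) (hcb : G.Arrow c b) (hac : a ≠ c) (hnadj : ¬ G.Adj a c) :
    H.Arrow a b ∧ H.Arrow c b := by
  have key : ∀ {a c}, ρ.symm a < ρ.symm c → G.Arrow a b → G.Arrow c b → ¬ G.Adj a c →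
      H.Arrow a b ∧ H.Arrow c b := fun {a c} hac hab hcb hnadj => by
    by_contra hn
    have hbc : ρ.symm b < ρ.symm c := by
      rcases hGH.adj hρ hab.adj with h₁ | h₁
      · rcases hGH.adj hρ hcb.adj with h₂ | h₂
        · exact absurd ⟨h₁, h₂⟩ hn
        · exact hρ _ _ h₂
      · exact (hρ _ _ h₁).trans hac
    have hCI := hρ.mem_CIof hac fun h => hnadj (hGH.symm.adj hσ h)
    rw [← hGH] at hCI
    exact hCI.2.2.2 (DAG.dConn_of_collider hab hcb (mem_condSet.mpr ⟨hab.ne.symm, hbc⟩))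
  rcases lt_or_gt_of_ne fun e => hac (ρ.symm.injective e) with h | h
  · exact key h hab hcb hnadj
  · exact (key h hcb hab fun h => hnadj h.symm).symm

end MarkovEquiv

end MinimalIMAP

namespace DAG

variable {G G' : DAG p} {S : Finset (Fin p)} {u v a b x y z : Fin p} {out : Bool}

theorem arrow_reversal_iff (hG' : G'.arrows = insert (v, u) (G.arrows.erase (u, v))) :
    G'.Arrow a b ↔ (a, b) = (v, u) ∨ ((a, b) ≠ (u, v) ∧ G.Arrow a b) := by
  rw [Arrow, hG', Finset.mem_insert, Finset.mem_erase]
  rfl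

/-- What a walk towards `y`, leaving `z` with flag `out`, in the graph obtained from `G` by
reversing the covered arrow `u → v` guarantees about walks towards `y` in `G`. It is preserved
when an arrow is prepended, which shows that the reversal preserves d-connection. -/
def ReversalInv (G : DAG p) (S : Finset (Fin p)) (y u v z : Fin p) (out : Bool) : Prop :=
  let R := fun w f => G.ActiveWalk S (· ∈ S) w y f
  if z = u then
    if out then R u true
    else (R u false ∧ R v false) ∨ (R u true ∧ R v true ∧ v ∉ S) ∨ (R u true ∧ u ∉ S ∧ R v false)
  else if z = v then
    if out then R v true ∨ (R u true ∧ u ∉ S ∧ R v false) ∨ (R u false ∧ u ∈ S ∧ R v false)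
    else R v false ∧ R u false
  else R z out

namespace ReversalInv

local notation "W" => G.ActiveWalk S (· ∈ S)

theorem iff_of_ne (hu : z ≠ u) (hv : z ≠ v) : G.ReversalInv S y u v z out ↔ W z y out := by
  simp [ReversalInv, hu, hv]

theorem u_true_iff : G.ReversalInv S y u v u true ↔ W u y true := by
  simp [ReversalInv]

theorem u_false_iff : G.ReversalInv S y u v u false ↔
    (W u y false ∧ W v y false) ∨ (W u y true ∧ W v y true ∧ v ∉ S) ∨
      (W u y true ∧ u ∉ S ∧ W v y false) := by
  simp [ReversalInv]

theorem v_true_iff (huv : u ≠ v) : G.ReversalInv S y u v v true ↔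
    W v y true ∨ (W u y true ∧ u ∉ S ∧ W v y false) ∨ (W u y false ∧ u ∈ S ∧ W v y false) := by
  simp [ReversalInv, huv.symm]

theorem v_false_iff (huv : u ≠ v) :
    G.ReversalInv S y u v v false ↔ W v y false ∧ W u y false := by
  simp [ReversalInv, huv.symm]

theorem of_out (h : W z y true) : G.ReversalInv S y u v z true := by
  unfold ReversalInv
  split_ifs <;> simp_all

theorem exists_walk (h : G.ReversalInv S y u v z out) : ∃ out', W z y out' := by
  unfold ReversalInv at h
  split_ifs at h <;> cases out <;> aesop

theorem cons_in (hcov : G.Covered u v)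
    (hG' : G'.arrows = insert (v, u) (G.arrows.erase (u, v))) (e : G'.Arrow b a) (hb : b ∉ S)
    (h : G.ReversalInv S y u v b out) : G.ReversalInv S y u v a false := by
  have huv := hcov.1.ne
  rcases (arrow_reversal_iff hG').mp e with hba | ⟨hba, e⟩
  · obtain ⟨rfl, rfl⟩ := Prod.mk.inj hba
    rw [u_false_iff]
    cases out
    · obtain ⟨hv, hu⟩ := (v_false_iff huv).mp h
      exact Or.inl ⟨hu, hv⟩
    · rcases (v_true_iff huv).mp h with hv | h | ⟨hu, -, hv⟩
      · exact Or.inr (Or.inl ⟨.cons_out hcov.1 hb hv, hv, hb⟩)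
      · exact Or.inr (Or.inr h)
      · exact Or.inl ⟨hu, hv⟩
  · obtain ⟨out', hbw⟩ := h.exists_walk
    have hwa := ActiveWalk.cons_in e hb hbw
    by_cases hau : a = u
    · subst hau
      exact u_false_iff.mpr (Or.inl ⟨hwa, .cons_in (hcov.arrow_iff.mp e).1 hb hbw⟩)
    by_cases hav : a = v
    · subst hav
      have hbu : b ≠ u := fun h => hba (by rw [h])
      exact (v_false_iff huv).mpr ⟨hwa, .cons_in (hcov.arrow_iff.mpr ⟨e, hbu⟩) hb hbw⟩
    exact (iff_of_ne hau hav).mpr hwa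

theorem cons_out (hcov : G.Covered u v)
    (hG' : G'.arrows = insert (v, u) (G.arrows.erase (u, v))) (e : G'.Arrow a b) (hb : b ∉ S)
    (h : G.ReversalInv S y u v b true) : G.ReversalInv S y u v a true := by
  have huv := hcov.1.ne
  rcases (arrow_reversal_iff hG').mp e with hab | ⟨hab, e⟩
  · obtain ⟨rfl, rfl⟩ := Prod.mk.inj hab
    have hu := u_true_iff.mp h
    exact (v_true_iff huv).mpr (Or.inr (Or.inl ⟨hu, hb, .cons_in hcov.1 hb hu⟩))
  refine of_out ?_
  by_cases hbu : b = u
  · subst hbu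
    exact .cons_out e hb (u_true_iff.mp h)
  by_cases hbv : b = v
  · subst hbv
    have hau : G.Arrow a u := hcov.arrow_iff.mpr ⟨e, fun h => hab (by rw [h])⟩
    rcases (v_true_iff huv).mp h with hv | ⟨hu, hu', -⟩ | ⟨hu, hu', -⟩
    · exact .cons_out e hb hv
    · exact .cons_out hau hu' hu
    · exact .cons_collider hau hu' hu
  exact .cons_out e hb ((iff_of_ne hbu hbv).mp h)

theorem cons_collider (hcov : G.Covered u v)
    (hG' : G'.arrows = insert (v, u) (G.arrows.erase (u, v))) (e : G'.Arrow a b) (hb : b ∈ S)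
    (h : G.ReversalInv S y u v b false) : G.ReversalInv S y u v a true := by
  have huv := hcov.1.ne
  rcases (arrow_reversal_iff hG').mp e with hab | ⟨hab, e⟩
  · obtain ⟨rfl, rfl⟩ := Prod.mk.inj hab
    refine (v_true_iff huv).mpr ?_
    rcases u_false_iff.mp h with ⟨hu, hv⟩ | ⟨-, hv, -⟩ | ⟨-, hu', -⟩
    · exact Or.inr (Or.inr ⟨hu, hb, hv⟩)
    · exact Or.inl hv
    · exact absurd hb hu'
  refine of_out ?_
  by_cases hbu : b = u
  · subst hbu
    rcases u_false_iff.mp h with ⟨hu, -⟩ | ⟨-, hv, hv'⟩ | ⟨-, hu', -⟩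
    · exact .cons_collider e hb hu
    · exact .cons_out (hcov.arrow_iff.mp e).1 hv' hv
    · exact absurd hb hu'
  by_cases hbv : b = v
  · subst hbv
    exact .cons_collider e hb ((v_false_iff huv).mp h).1
  exact .cons_collider e hb ((iff_of_ne hbu hbv).mp h)

theorem of_activeWalk (hcov : G.Covered u v)
    (hG' : G'.arrows = insert (v, u) (G.arrows.erase (u, v)))
    (hw : G'.ActiveWalk S (· ∈ S) z y out) : G.ReversalInv S y u v z out := by
  induction hw with
  | nil y => exact of_out (.nil y)
  | cons_in e hb _ ih => exact ih.cons_in hcov hG' e hb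
  | cons_out e hb _ ih => exact ih.cons_out hcov hG' e hb
  | cons_collider e hb _ ih => exact ih.cons_collider hcov hG' e hb

end ReversalInv

theorem DConn.of_reversal (hcov : G.Covered u v)
    (hG' : G'.arrows = insert (v, u) (G.arrows.erase (u, v))) (hy : y ∉ S)
    (h : G'.DConn x y S) : G.DConn x y S := by
  obtain ⟨out, hw⟩ := (dConn_iff_exists_activeWalk hy).mp h
  exact (dConn_iff_exists_activeWalk hy).mpr (ReversalInv.of_activeWalk hcov hG' hw).exists_walk

theorem Covered.reversal (hcov : G.Covered u v)
    (hG' : G'.arrows = insert (v, u) (G.arrows.erase (u, v))) :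
    G'.Covered v u ∧ G.arrows = insert (u, v) (G'.arrows.erase (v, u)) := by
  have huv := hcov.1.ne
  refine ⟨covered_iff.mpr ⟨(arrow_reversal_iff hG').mpr (Or.inl rfl), fun x => ?_⟩, ?_⟩
  · simp only [arrow_reversal_iff hG', ne_eq, Prod.mk.injEq, hcov.arrow_iff]
    have := @Arrow.ne _ G x v
    grind
  · rw [hG', Finset.erase_insert fun h => hcov.1.asymm (Finset.mem_of_mem_erase h),
      Finset.insert_erase hcov.1]

theorem CIof_eq_of_covered_reversal (hcov : G.Covered u v)
    (hG' : G'.arrows = insert (v, u) (G.arrows.erase (u, v))) : CIof G' = CIof G := by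
  obtain ⟨hcov', hG⟩ := hcov.reversal hG'
  ext ⟨x, y, S⟩
  exact ⟨fun ⟨h₁, h₂, h₃, h₄⟩ => ⟨h₁, h₂, h₃, fun h => h₄ (h.of_reversal hcov' hG h₃)⟩,
    fun ⟨h₁, h₂, h₃, h₄⟩ => ⟨h₁, h₂, h₃, fun h => h₄ (h.of_reversal hcov hG' h₃)⟩⟩

end DAG

section Transposition

variable {C : Set (CIRel p)} {α : Equiv.Perm (Fin p)} {a b u v w x y : Fin p}

theorem Graphoid.mem_insert_iff (hC : Graphoid C) {W : Finset (Fin p)}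
    (h : (b, w, insert a W) ∈ C) : (a, b, insert w W) ∈ C ↔ (a, b, W) ∈ C := by
  obtain ⟨⟨hsymm, hsg⟩, hint⟩ := hC
  exact ⟨fun h' => hsymm _ _ _ (hint b a w W (hsymm _ _ _ h') h).1,
    fun h' => hsymm _ _ _ (hsg b a w W (hsymm _ _ _ h') h).2⟩

/-- The rule deciding the parents of `b` in a minimal I-MAP, for `b` preceded by `P`, does not
see a node `w ∉ P` with `b ⊥ w | P`. -/
theorem Graphoid.parent_rule_insert_iff (hC : Graphoid C) {P : Finset (Fin p)} (hw : w ∉ P)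
    (hbw : (b, w, P) ∈ C) :
    (a ∈ insert w P ∧ (a, b, (insert w P).erase a) ∉ C) ↔ (a ∈ P ∧ (a, b, P.erase a) ∉ C) := by
  by_cases haw : a = w
  · subst haw
    simp only [Finset.mem_insert_self, Finset.erase_insert hw, true_and, hw, false_and,
      iff_false, not_not]
    exact hC.1.1 _ _ _ hbw
  rw [Finset.mem_insert, or_iff_right haw]
  refine and_congr_right fun ha => not_congr ?_
  rw [Finset.erase_insert_of_ne (Ne.symm haw)]
  exact hC.mem_insert_iff (by rwa [Finset.insert_erase ha])

theorem swap_mul_symm_apply (α : Equiv.Perm (Fin p)) (u v x : Fin p) :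
    (Equiv.swap u v * α).symm x = α.symm (Equiv.swap u v x) := by
  simp [Equiv.Perm.mul_def]

theorem lt_iff_lt_of_covBy (hc : α.symm u ⋖ α.symm v) (hxu : x ≠ u) :
    α.symm x < α.symm u ↔ α.symm x < α.symm v := by
  rw [← hc.le_iff_lt_left, le_iff_lt_or_eq, or_iff_left fun h => hxu (α.symm.injective h)]

theorem predSet_of_covBy (hc : α.symm u ⋖ α.symm v) : predSet α v = insert u (predSet α u) := by
  ext k
  rw [Finset.mem_insert, mem_predSet, mem_predSet, ← hc.le_iff_lt_left, le_iff_lt_or_eq,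
    α.symm.injective.eq_iff, or_comm]

theorem predSet_swap_mul_left (hc : α.symm u ⋖ α.symm v) :
    predSet (Equiv.swap u v * α) v = predSet α u := by
  ext k
  simp only [mem_predSet, swap_mul_symm_apply, Equiv.swap_apply_right]
  rcases eq_or_ne k u with rfl | hku
  · simp only [Equiv.swap_apply_left, lt_self_iff_false, iff_false, not_lt, hc.lt.le]
  rcases eq_or_ne k v with rfl | hkv
  · simp only [Equiv.swap_apply_right, lt_self_iff_false, false_iff, not_lt, hc.lt.le]
  rw [Equiv.swap_apply_of_ne_of_ne hku hkv]

theorem predSet_swap_mul_right (hc : α.symm u ⋖ α.symm v) :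
    predSet (Equiv.swap u v * α) u = insert v (predSet α u) := by
  ext k
  simp only [Finset.mem_insert, mem_predSet, swap_mul_symm_apply, Equiv.swap_apply_left]
  rcases eq_or_ne k u with rfl | hku
  · simp [α.symm.injective.ne_iff.mp hc.ne]
  rcases eq_or_ne k v with rfl | hkv
  · simp [hc.lt]
  rw [Equiv.swap_apply_of_ne_of_ne hku hkv, ← lt_iff_lt_of_covBy hc hku]
  simp [hkv]

theorem predSet_swap_mul_of_ne (hc : α.symm u ⋖ α.symm v) (hyu : y ≠ u) (hyv : y ≠ v) :
    predSet (Equiv.swap u v * α) y = predSet α y := by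
  ext k
  simp only [mem_predSet, swap_mul_symm_apply, Equiv.swap_apply_of_ne_of_ne hyu hyv]
  have hvy : α.symm u < α.symm y ↔ α.symm v < α.symm y := by
    rw [hc.lt_iff_le_right, le_iff_lt_or_eq, or_iff_left fun h => hyv (α.symm.injective h).symm]
  rcases eq_or_ne k u with rfl | hku
  · rw [Equiv.swap_apply_left, hvy]
  rcases eq_or_ne k v with rfl | hkv
  · rw [Equiv.swap_apply_right, hvy]
  rw [Equiv.swap_apply_of_ne_of_ne hku hkv]

theorem lt_swap_mul_iff (hc : α.symm u ⋖ α.symm v) (hxy : (x, y) ≠ (u, v))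
    (hyx : (x, y) ≠ (v, u)) :
    (Equiv.swap u v * α).symm x < (Equiv.swap u v * α).symm y ↔ α.symm x < α.symm y := by
  rw [← mem_predSet, ← mem_predSet (π := α)]
  rcases eq_or_ne y u with rfl | hyu
  · rw [predSet_swap_mul_right hc, Finset.mem_insert, or_iff_right fun h => hyx (by rw [h])]
  rcases eq_or_ne y v with rfl | hyv
  · rw [predSet_swap_mul_left hc, predSet_of_covBy hc, Finset.mem_insert,
      or_iff_right fun h => hxy (by rw [h])]
  rw [predSet_swap_mul_of_ne hc hyu hyv]

theorem condSet_of_covBy (hc : α.symm u ⋖ α.symm v) : condSet α u v = predSet α u := by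
  rw [condSet_eq_erase_predSet, predSet_of_covBy hc,
    Finset.erase_insert fun h => (mem_predSet.mp h).false]

theorem minimalIMAP_swap_of_not_arrow (hC : Graphoid C) (hc : α.symm u ⋖ α.symm v)
    (huv : ¬ (minimalIMAP C α).Arrow u v) :
    minimalIMAP C (Equiv.swap u v * α) = minimalIMAP C α := by
  have hCI : (u, v, predSet α u) ∈ C := by
    simpa [minimalIMAP_arrow_iff, hc.lt, condSet_of_covBy hc] using huv
  have hu : u ∉ predSet α u := fun h => (mem_predSet.mp h).false
  have hv : v ∉ predSet α u := fun h => (mem_predSet.mp h).asymm hc.lt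
  refine DAG.ext fun a b => ?_
  rw [minimalIMAP_arrow_iff_predSet, minimalIMAP_arrow_iff_predSet]
  rcases eq_or_ne b u with rfl | hbu
  · rw [predSet_swap_mul_right hc, hC.parent_rule_insert_iff hv hCI]
  rcases eq_or_ne b v with rfl | hbv
  · rw [predSet_swap_mul_left hc, predSet_of_covBy hc,
      hC.parent_rule_insert_iff hu (hC.1.1 _ _ _ hCI)]
  rw [predSet_swap_mul_of_ne hc hbu hbv]

theorem not_arrow_swap_mul_of_not_arrow (hC : Semigraphoid C) (hc : α.symm u ⋖ α.symm v)
    (ha : a ∈ predSet α u) (hau : ¬ (minimalIMAP C α).Arrow a u)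
    (hav : ¬ (minimalIMAP C α).Arrow a v) :
    ¬ (minimalIMAP C (Equiv.swap u v * α)).Arrow a u ∧
      ¬ (minimalIMAP C (Equiv.swap u v * α)).Arrow a v := by
  have hau' : a ≠ u := fun h => (mem_predSet.mp (h ▸ ha)).false
  have hav' : a ≠ v := fun h => (mem_predSet.mp (h ▸ ha)).asymm hc.lt
  rw [minimalIMAP_arrow_iff_predSet, not_and, not_not] at hau hav
  rw [predSet_of_covBy hc, Finset.erase_insert_of_ne hau'.symm] at hav
  obtain ⟨h₁, h₂⟩ := hC.2 a u v _ (hau ha) (hav (Finset.mem_insert_of_mem ha))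
  rw [minimalIMAP_arrow_iff_predSet, minimalIMAP_arrow_iff_predSet, predSet_swap_mul_right hc,
    predSet_swap_mul_left hc, Finset.erase_insert_of_ne hav'.symm]
  exact ⟨fun h => h.2 h₂, fun h => h.2 h₁⟩

theorem minimalIMAP_swap_arrow_of_covered (hC : Semigraphoid C) (hc : α.symm u ⋖ α.symm v)
    (hcov : (minimalIMAP C α).Covered u v)
    (h : (minimalIMAP C (Equiv.swap u v * α)).Arrow a b) :
    (a, b) = (v, u) ∨ ((a, b) ≠ (u, v) ∧ (minimalIMAP C α).Arrow a b) := by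
  have huv := hcov.1.ne
  rcases eq_or_ne b u with hbu | hbu
  · rw [hbu] at h ⊢
    rcases eq_or_ne a v with hav | hav
    · exact Or.inl (by rw [hav])
    have ha : a ∈ predSet α u := by
      have := (minimalIMAP_arrow_iff_predSet.mp h).1
      rwa [predSet_swap_mul_right hc, Finset.mem_insert, or_iff_right hav] at this
    refine Or.inr ⟨fun h => huv (Prod.mk.inj h).2, ?_⟩
    by_contra hau
    have hau' : a ≠ u := fun h => (mem_predSet.mp (h ▸ ha)).false
    exact (not_arrow_swap_mul_of_not_arrow hC hc ha hau
      fun h' => hau (hcov.arrow_iff.mpr ⟨h', hau'⟩)).1 h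
  rcases eq_or_ne b v with hbv | hbv
  · rw [hbv] at h ⊢
    have ha : a ∈ predSet α u := by
      simpa [predSet_swap_mul_left hc] using (minimalIMAP_arrow_iff_predSet.mp h).1
    have hau : a ≠ u := fun h => (mem_predSet.mp (h ▸ ha)).false
    refine Or.inr ⟨fun h => hau (Prod.mk.inj h).1, ?_⟩
    by_contra hav
    exact (not_arrow_swap_mul_of_not_arrow hC hc ha (fun h' => hav (hcov.arrow_iff.mp h').1)
      hav).2 h
  exact Or.inr ⟨fun h => hbv (Prod.mk.inj h).2,
    (minimalIMAP_arrow_congr (predSet_swap_mul_of_ne hc hbu hbv)).mp h⟩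

end Transposition

section CoveredReversal

variable {C : Set (CIRel p)} {π σ α ρ : Equiv.Perm (Fin p)} {a b u v : Fin p}

def IsLinExtOfReversal (G : DAG p) (u v : Fin p) (ρ : Equiv.Perm (Fin p)) : Prop :=
  ρ.symm v < ρ.symm u ∧ ∀ x y, G.Arrow x y → (x, y) ≠ (u, v) → ρ.symm x < ρ.symm y

namespace DAG

variable {G H : DAG p}

noncomputable def reverse (G : DAG p) (u v : Fin p) (hρ : IsLinExtOfReversal G u v ρ) : DAG p :=
  mkDAG (fun a b => (a, b) ∈ insert (v, u) (G.arrows.erase (u, v))) (fun a => ρ.symm a)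
    fun a b h => by
      rcases Finset.mem_insert.mp h with h | h
      · obtain ⟨rfl, rfl⟩ := Prod.mk.inj h
        exact hρ.1
      · exact hρ.2 a b (Finset.mem_of_mem_erase h) (Finset.ne_of_mem_erase h)

theorem arrows_reverse (hρ : IsLinExtOfReversal G u v ρ) :
    (G.reverse u v hρ).arrows = insert (v, u) (G.arrows.erase (u, v)) := by
  ext
  simp [reverse, mkDAG]

theorem isLinExt_reverse (hρ : IsLinExtOfReversal G u v ρ) : IsLinExt (G.reverse u v hρ) ρ :=
  fun a b h => by
    rcases (arrow_reversal_iff (arrows_reverse hρ)).mp h with h | ⟨h, h'⟩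
    · obtain ⟨rfl, rfl⟩ := Prod.mk.inj h
      exact hρ.1
    · exact hρ.2 a b h' h

theorem eq_of_arrow_imp_of_adj_imp (harr : ∀ a b, G.Arrow a b → H.Arrow a b)
    (hadj : ∀ a b, H.Adj a b → G.Adj a b) : G = H :=
  ext fun a b => ⟨harr a b, fun h => (hadj a b h.adj).resolve_right fun h' => h.asymm (harr _ _ h')⟩

end DAG

theorem isLinExtOfReversal_swap_mul (hc : α.symm u ⋖ α.symm v) :
    IsLinExtOfReversal (minimalIMAP C α) u v (Equiv.swap u v * α) := by
  refine ⟨?_, fun x y h hxy => ?_⟩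
  · simpa [swap_mul_symm_apply] using hc.lt
  have hlt := isLinExt_minimalIMAP C α x y h
  refine (lt_swap_mul_iff hc hxy fun hyx => ?_).mpr hlt
  obtain ⟨rfl, rfl⟩ := Prod.mk.inj hyx
  exact hlt.asymm hc.lt

/-- The semigraphoid axioms put every arrow of the new minimal I-MAP into the reversal;
MEC-s-minimality of `G_π` forbids losing one. -/
theorem minimalIMAP_swap_eq_reverse (hC : Graphoid C) (hmin : MECsMinimal C π)
    (hc : α.symm u ⋖ α.symm v) (hcov : (minimalIMAP C α).Covered u v)
    (hαπ : MarkovEquiv (minimalIMAP C α) (minimalIMAP C π)) :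
    minimalIMAP C (Equiv.swap u v * α) =
      (minimalIMAP C α).reverse u v (isLinExtOfReversal_swap_mul hc) := by
  have hrev := DAG.arrows_reverse (isLinExtOfReversal_swap_mul (C := C) hc)
  have hrevπ : MarkovEquiv ((minimalIMAP C α).reverse u v (isLinExtOfReversal_swap_mul hc))
      (minimalIMAP C π) := (DAG.CIof_eq_of_covered_reversal hcov hrev).trans hαπ
  refine DAG.eq_of_arrow_imp_of_adj_imp (fun a b h => (DAG.arrow_reversal_iff hrev).mpr
    (minimalIMAP_swap_arrow_of_covered hC.1 hc hcov h)) fun a b h => ?_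
  exact hmin.2 _ hrevπ _ (DAG.isLinExt_reverse _) a b (hrevπ.adj (isLinExt_minimalIMAP C π) h)

/-- The node just before `v` lies after `u`, so it is not a parent of `v` (it would be one of
`u`), and transposing it with `v` keeps the minimal I-MAP. -/
theorem exists_covBy_of_covered (hC : Graphoid C) (hcov : (minimalIMAP C α).Covered u v) :
    ∃ α', minimalIMAP C α' = minimalIMAP C α ∧ α'.symm u ⋖ α'.symm v := by
  suffices ∀ k α, α.symm v = k → (minimalIMAP C α).Covered u v →
      ∃ α', minimalIMAP C α' = minimalIMAP C α ∧ α'.symm u ⋖ α'.symm v from this _ α rfl hcov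
  intro k
  induction k using WellFoundedLT.induction with
  | _ k ih =>
  intro α hk hcov
  obtain ⟨k', hk', hcovk⟩ := exists_le_covBy_of_lt (isLinExt_minimalIMAP C α u v hcov.1)
  rcases hk'.eq_or_lt with h | h
  · exact ⟨α, rfl, h ▸ hcovk⟩
  obtain ⟨w, rfl⟩ := α.symm.surjective k'
  have hwv : ¬ (minimalIMAP C α).Arrow w v := fun h' =>
    (isLinExt_minimalIMAP C α w u (hcov.arrow_iff.mpr ⟨h', fun h' => h.ne (h' ▸ rfl)⟩)).asymm h
  have heq := minimalIMAP_swap_of_not_arrow hC hcovk hwv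
  obtain ⟨α', h₁, h₂⟩ := ih (α.symm w) (hk ▸ hcovk.lt) (Equiv.swap w v * α)
    (by simp [swap_mul_symm_apply]) (heq ▸ hcov)
  exact ⟨α', h₁.trans heq, h₂⟩

theorem exists_coveredReversalStep (hC : Graphoid C) (hmin : MECsMinimal C π)
    (hσπ : MarkovEquiv (minimalIMAP C σ) (minimalIMAP C π))
    (hcov : (minimalIMAP C σ).Covered u v) :
    ∃ β, CoveredReversalStep C σ β ∧
      (minimalIMAP C β).arrows = insert (v, u) ((minimalIMAP C σ).arrows.erase (u, v)) ∧
      MarkovEquiv (minimalIMAP C β) (minimalIMAP C π) := by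
  obtain ⟨α, hασ, hc⟩ := exists_covBy_of_covered hC hcov
  have hlin := isLinExtOfReversal_swap_mul (C := C) hc
  rw [← hασ] at hσπ hcov
  have heq := minimalIMAP_swap_eq_reverse hC hmin hc hcov hσπ
  refine ⟨Equiv.swap u v * α, ⟨u, v, hασ ▸ hcov, hασ ▸ hlin⟩, ?_, ?_⟩
  · rw [heq, DAG.arrows_reverse, hασ]
  · rw [MarkovEquiv, heq, DAG.CIof_eq_of_covered_reversal hcov (DAG.arrows_reverse _)]
    exact hσπ

end CoveredReversal

section Chickering

variable {σ τ : Equiv.Perm (Fin p)} {a b u v : Fin p}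

namespace DAG

variable {G G' H : DAG p}

noncomputable def reversedArrows (G H : DAG p) : Finset (Fin p × Fin p) :=
  G.arrows.filter fun e => (e.2, e.1) ∈ H.arrows

theorem mem_reversedArrows : (a, b) ∈ G.reversedArrows H ↔ G.Arrow a b ∧ H.Arrow b a := by
  simp [reversedArrows, Arrow]

theorem reversedArrows_of_reversal (hG' : G'.arrows = insert (v, u) (G.arrows.erase (u, v)))
    (hvu : H.Arrow v u) : G'.reversedArrows H = (G.reversedArrows H).erase (u, v) := by
  ext ⟨a, b⟩
  rw [Finset.mem_erase, mem_reversedArrows, mem_reversedArrows, arrow_reversal_iff hG']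
  constructor
  · rintro ⟨h | ⟨hab, h⟩, h'⟩
    · obtain ⟨rfl, rfl⟩ := Prod.mk.inj h
      exact absurd h' hvu.asymm
    · exact ⟨hab, h, h'⟩
  · rintro ⟨hab, h, h'⟩
    exact ⟨Or.inr ⟨hab, h⟩, h'⟩

theorem numArrows_of_reversal (hG' : G'.arrows = insert (v, u) (G.arrows.erase (u, v)))
    (huv : G.Arrow u v) : G'.numArrows = G.numArrows := by
  rw [numArrows, numArrows, hG',
    Finset.card_insert_of_notMem fun h => huv.asymm (Finset.mem_of_mem_erase h),
    Finset.card_erase_add_one huv]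

end DAG

namespace MarkovEquiv

variable {G H : DAG p}

theorem eq_of_reversedArrows_eq_empty (hGH : MarkovEquiv G H) (hσ : IsLinExt G σ)
    (hτ : IsLinExt H τ) (h : G.reversedArrows H = ∅) : G = H :=
  DAG.eq_of_arrow_imp_of_adj_imp (fun a b hab => (hGH.adj hτ hab.adj).resolve_right fun hba =>
    Finset.notMem_empty (a, b) (h ▸ DAG.mem_reversedArrows.mpr ⟨hab, hba⟩))
    fun _ _ h => hGH.symm.adj hσ h

theorem covered_of_extremal (hGH : MarkovEquiv G H) (hσ : IsLinExt G σ) (hτ : IsLinExt H τ)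
    (huv : G.Arrow u v) (hvu : H.Arrow v u)
    (hhead : ∀ a b, G.Arrow a b → H.Arrow b a → σ.symm v ≤ σ.symm b)
    (htail : ∀ a, G.Arrow a v → H.Arrow v a → σ.symm a ≤ σ.symm u) : G.Covered u v := by
  refine DAG.covered_iff.mpr ⟨huv, fun x => ⟨fun hxu => ?_, fun ⟨hxv, hxu⟩ => ?_⟩⟩
  · have hHxu : H.Arrow x u := (hGH.adj hτ hxu.adj).resolve_right fun h =>
      (hhead _ _ hxu h).not_gt (hσ _ _ huv)
    have hadj : G.Adj x v := by
      by_contra hn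
      exact huv.asymm (hGH.symm.arrow_of_vStructure hτ hσ hHxu hvu
        (fun h => hxu.asymm (h ▸ huv)) fun h => hn (hGH.symm.adj hσ h)).2
    exact ⟨hadj.resolve_right fun h => (hσ _ _ h).asymm ((hσ _ _ hxu).trans (hσ _ _ huv)),
      hxu.ne⟩
  · have hadj : G.Adj x u := by
      by_contra hn
      exact hvu.asymm (hGH.arrow_of_vStructure hσ hτ hxv huv hxu hn).2
    refine hadj.resolve_right fun hux => ?_
    rcases hGH.adj hτ hxv.adj with hHxv | hHvx
    · rcases hGH.adj hτ hux.adj with hHux | hHxu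
      · exact H.acyclic v (.head hvu (.head hHux (.single hHxv)))
      · exact (hhead _ _ hux hHxu).not_gt (hσ _ _ hxv)
    · exact (htail _ hxv hHvx).not_gt (hσ _ _ hux)

/-- Chickering's lemma: the reversed arrow with earliest head, and latest tail among those, is
covered. -/
theorem exists_covered_reversed (hGH : MarkovEquiv G H) (hσ : IsLinExt G σ) (hτ : IsLinExt H τ)
    (h : (G.reversedArrows H).Nonempty) : ∃ u v, G.Covered u v ∧ H.Arrow v u := by
  obtain ⟨⟨a₀, v⟩, h₀, hhead⟩ := Finset.exists_min_image _ (fun e => σ.symm e.2) h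
  obtain ⟨⟨u, v'⟩, h₁, htail⟩ := Finset.exists_max_image
    ((G.reversedArrows H).filter (·.2 = v)) (fun e => σ.symm e.1) ⟨(a₀, v), by simpa using h₀⟩
  obtain ⟨hrev, rfl : v' = v⟩ := Finset.mem_filter.mp h₁
  obtain ⟨huv, hvu⟩ := DAG.mem_reversedArrows.mp hrev
  refine ⟨u, v', hGH.covered_of_extremal hσ hτ huv hvu
    (fun a b hab hba => hhead (a, b) (DAG.mem_reversedArrows.mpr ⟨hab, hba⟩))
    (fun a hav hva => htail (a, v') (by simpa using DAG.mem_reversedArrows.mpr ⟨hav, hva⟩)), hvu⟩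

end MarkovEquiv

end Chickering

section WeaklyDecreasingWalk

variable {C : Set (CIRel p)} {π σ τ : Equiv.Perm (Fin p)}

theorem exists_weaklyDecreasingSeq (hC : Graphoid C) (hmin : MECsMinimal C π)
    (hME : MarkovEquiv (minimalIMAP C π) (minimalIMAP C τ))
    (hσπ : MarkovEquiv (minimalIMAP C σ) (minimalIMAP C π)) :
    ∃ (s : List (Equiv.Perm (Fin p))) (ρ : Equiv.Perm (Fin p)),
      s.head? = some σ ∧ s.getLast? = some ρ ∧
      minimalIMAP C ρ = minimalIMAP C τ ∧ WeaklyDecreasingSeq C s := by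
  induction hn : ((minimalIMAP C σ).reversedArrows (minimalIMAP C τ)).card
    using Nat.strong_induction_on generalizing σ with
  | _ n ih =>
  by_cases heq : minimalIMAP C σ = minimalIMAP C τ
  · exact ⟨[σ], σ, rfl, rfl, heq, List.isChain_singleton σ⟩
  have hστ := hσπ.trans hME
  obtain ⟨u, v, hcov, hvu⟩ := hστ.exists_covered_reversed (isLinExt_minimalIMAP C σ)
    (isLinExt_minimalIMAP C τ) (Finset.nonempty_iff_ne_empty.mpr fun h =>
      heq (hστ.eq_of_reversedArrows_eq_empty (isLinExt_minimalIMAP C σ)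
        (isLinExt_minimalIMAP C τ) h))
  obtain ⟨β, hstep, harr, hβπ⟩ := exists_coveredReversalStep hC hmin hσπ hcov
  obtain ⟨_ | ⟨β', t⟩, ρ, hs, hl, hρ, hseq⟩ := ih _ (by
      rw [← hn, DAG.reversedArrows_of_reversal harr hvu]
      exact Finset.card_erase_lt_of_mem (DAG.mem_reversedArrows.mpr ⟨hcov.1, hvu⟩))
    hβπ rfl
  · simp at hs
  obtain rfl : β' = β := by simpa using hs
  exact ⟨σ :: β' :: t, ρ, rfl, hl, hρ, List.isChain_cons_cons.mpr
    ⟨⟨hstep, (DAG.numArrows_of_reversal harr hcov.1).le⟩, hseq⟩⟩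

end WeaklyDecreasingWalk

/-- Theorem 11(i): if `C` is a graphoid, `G_π` and `G_τ` are
Markov equivalent minimal I-MAPs w.r.t. `C`, and `G_π` is MEC-s-minimal, then
there is a weakly decreasing sequence of covered arrow reversals from `G_π`
to `G_τ`. -/
theorem weakly_decreasing_walk_within_MEC
    (p : ℕ) (C : Set (CIRel p)) (hC : Graphoid C)
    (π τ : Equiv.Perm (Fin p))
    (hME : MarkovEquiv (minimalIMAP C π) (minimalIMAP C τ))
    (hmin : MECsMinimal C π) :
    ∃ (s : List (Equiv.Perm (Fin p))) (ρ : Equiv.Perm (Fin p)),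
      s.head? = some π ∧ s.getLast? = some ρ ∧
      minimalIMAP C ρ = minimalIMAP C τ ∧
      WeaklyDecreasingSeq C s :=
  exists_weaklyDecreasingSeq hC hmin hME rfl

end GSP
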